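/- Identify ℝⁿ with ℝ^{m₁} × ⋯ × ℝ^{m_d} (d ≥ 2). Let f : ℝⁿ → ℝ be C² and strictly convex with unique minimum point x*. Let (x_k)_{k≥0} be the partial-minimization algorithm sequence: x_{k+1} is x_k with the block j_k replaced by the partial minimizer, where j_k maximizes ‖∇_l f(x_k)‖ over l ∈ [d]. Set t_k = f(x_k), and for each k let 0 < α(t_k) ≤ β(t_k) bound all eigenvalues of H(f)(y) on V(t_k) = {y : f(y) ≤ t_k}; κ(t_k) = β(t_k)/α(t_k). Then for every k ≥ 1: ‖x_k − x*‖² ≤ (‖∇f(x₀)‖²/(α(t_k)·α(t₀)))·(1 − 1/(d·κ(t₀)))·∏_{i=1}^{k−1}(1 − 1/((d−1)·κ(t_i))). -/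

import Mathlib

/-!
Each block step is a gradient step in disguise: minimizing over the block `j` does at least as
well as moving from `x` by `-(1/β) ∇_j f(x)` inside that block, and the Hessian bound `β` on the
sublevel set turns this into the descent `f(x') ≤ f(x) - ‖∇_j f(x)‖² / (2β)`. Since `j` carries
the largest block gradient, `‖∇f(x)‖² ≤ d ‖∇_j f(x)‖²`, and from the second step on one block
(the one minimized last) has zero gradient, improving `d` to `d - 1`. The lower Hessian bound `α`
gives the Polyak–Łojasiewicz inequality `2α (f(x) - f(x*)) ≤ ‖∇f(x)‖²`, so the gap `f(x_k) - f(x*)`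
contracts by `1 - 1/(dκ)` at each step, and by strong convexity
`α ‖x_k - x*‖² ≤ 2 (f(x_k) - f(x*))`.
-/

open Set Topology

section RealLine

variable {g g' g'' : ℝ → ℝ}

theorem sub_le_mul_of_hasDerivAt_le {T C : ℝ} (hT : 0 ≤ T) (hg : ∀ t, HasDerivAt g (g' t) t)
    (hC : ∀ t ∈ Icc 0 T, g' t ≤ C) : g T - g 0 ≤ C * T := by
  simpa using (convex_Icc 0 T).image_sub_le_mul_sub_of_deriv_le
    (fun t _ => (hg t).continuousAt.continuousWithinAt)
    (fun t _ => (hg t).differentiableAt.differentiableWithinAt)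
    (fun t ht => (hg t).deriv ▸ hC t (interior_subset ht)) 0 (left_mem_Icc.2 hT) T
    (right_mem_Icc.2 hT) hT

theorem le_taylor_two_of_deriv2_le {T M : ℝ} (hT : 0 ≤ T) (h1 : ∀ t, HasDerivAt g (g' t) t)
    (h2 : ∀ t, HasDerivAt g' (g'' t) t) (hM : ∀ t ∈ Icc 0 T, g'' t ≤ M) :
    g T ≤ g 0 + g' 0 * T + M * T ^ 2 / 2 := by
  have hg' : ∀ t ∈ Icc 0 T, g' t - g' 0 - M * t ≤ 0 := fun t ht => by
    linarith [sub_le_mul_of_hasDerivAt_le ht.1 h2 fun s hs => hM s ⟨hs.1, hs.2.trans ht.2⟩]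
  have hφ : ∀ t, HasDerivAt (fun s => g s - g' 0 * s - M * s ^ 2 / 2) (g' t - g' 0 - M * t) t :=
    fun t => by
      refine (((h1 t).sub ((hasDerivAt_id t).const_mul (g' 0))).sub
        (((hasDerivAt_pow 2 t).const_mul M).div_const 2)).congr_deriv ?_
      simp only [mul_one, Nat.cast_ofNat]
      ring
  linarith [sub_le_mul_of_hasDerivAt_le hT hφ hg']

theorem taylor_two_le_of_le_deriv2 {T c : ℝ} (hT : 0 ≤ T) (h1 : ∀ t, HasDerivAt g (g' t) t)
    (h2 : ∀ t, HasDerivAt g' (g'' t) t) (hc : ∀ t ∈ Icc 0 T, c ≤ g'' t) :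
    g 0 + g' 0 * T + c * T ^ 2 / 2 ≤ g T := by
  have := le_taylor_two_of_deriv2_le (g := -g) (g' := -g') (g'' := -g'') (M := -c) hT
    (fun t => (h1 t).neg) (fun t => (h2 t).neg) fun t ht => neg_le_neg (hc t ht)
  simp only [Pi.neg_apply] at this
  linarith

theorem eventually_lt_of_hasDerivAt_neg {x a : ℝ} (hg : HasDerivAt g a x) (ha : a < 0) :
    ∀ᶠ t in 𝓝[>] x, g t < g x := by
  filter_upwards [(hg.hasDerivWithinAt (s := Ioi x)).limsup_slope_le' (lt_irrefl x) ha,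
    self_mem_nhdsWithin] with t ht hxt
  exact (slope_neg_iff_of_le (le_of_lt hxt)).1 ht

end RealLine

section Line

variable {E F : Type*} [NormedAddCommGroup E] [NormedSpace ℝ E] [NormedAddCommGroup F]
  [NormedSpace ℝ F] {f : E → F}

theorem hasDerivAt_comp_add_smul {x v : E} {t : ℝ} (hf : DifferentiableAt ℝ f (x + t • v)) :
    HasDerivAt (fun s : ℝ => f (x + s • v)) (fderiv ℝ f (x + t • v) v) t :=
  hf.hasFDerivAt.comp_hasDerivAt t (by simpa using ((hasDerivAt_id t).smul_const v).const_add x)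

theorem hasDerivAt_fderiv_comp_add_smul (hf : ContDiff ℝ 2 f) (x v : E) (t : ℝ) :
    HasDerivAt (fun s : ℝ => fderiv ℝ f (x + s • v) v)
      (iteratedFDeriv ℝ 2 f (x + t • v) ![v, v]) t := by
  have hf' : DifferentiableAt ℝ (fderiv ℝ f) (x + t • v) :=
    (hf.fderiv_right (m := 1) (by norm_num)).differentiable (by norm_num) _
  rw [iteratedFDeriv_two_apply]
  simpa using (hasDerivAt_comp_add_smul hf').clm_apply (hasDerivAt_const t v)

end Line

section Convex

variable {E : Type*} [NormedAddCommGroup E] [NormedSpace ℝ E] {f : E → ℝ}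

theorem iteratedFDeriv_two_nonneg (hf : ∀ x v : E, v ≠ 0 → 0 < iteratedFDeriv ℝ 2 f x ![v, v])
    (x v : E) : 0 ≤ iteratedFDeriv ℝ 2 f x ![v, v] := by
  rcases eq_or_ne v 0 with rfl | hv
  · rw [show ![(0 : E), 0] = 0 by ext i; fin_cases i <;> rfl, ContinuousMultilinearMap.map_zero]
  · exact (hf x v hv).le

theorem convexOn_comp_add_smul (hf : ContDiff ℝ 2 f)
    (hpos : ∀ x v : E, 0 ≤ iteratedFDeriv ℝ 2 f x ![v, v]) (x v : E) :
    ConvexOn ℝ univ fun t : ℝ => f (x + t • v) := by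
  have h1 (t : ℝ) := hasDerivAt_comp_add_smul (x := x) (v := v) (t := t)
    (hf.differentiable (by norm_num) _)
  refine convexOn_of_hasDerivWithinAt2_nonneg convex_univ
    (fun t _ => (h1 t).continuousAt.continuousWithinAt) (fun t _ => (h1 t).hasDerivWithinAt)
    (fun t _ => (hasDerivAt_fderiv_comp_add_smul hf x v t).hasDerivWithinAt)
    fun t _ => hpos _ _

theorem descent_lemma_of_hessian_le (hf : ContDiff ℝ 2 f)
    (hpos : ∀ y w : E, 0 ≤ iteratedFDeriv ℝ 2 f y ![w, w]) {x v : E} {β : ℝ} (hβ : 0 < β)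
    (hle : ∀ y, f y ≤ f x → ∀ w : E, iteratedFDeriv ℝ 2 f y ![w, w] ≤ β * ‖w‖ ^ 2)
    (hv : fderiv ℝ f x v = -‖v‖ ^ 2) :
    f (x + β⁻¹ • v) ≤ f x - ‖v‖ ^ 2 / (2 * β) := by
  rcases eq_or_ne v 0 with rfl | hv0
  · simp
  have h1 (t : ℝ) := hasDerivAt_comp_add_smul (x := x) (v := v) (t := t)
    (hf.differentiable (by norm_num) _)
  have h2 := hasDerivAt_fderiv_comp_add_smul hf x v
  have hv' : fderiv ℝ f (x + (0 : ℝ) • v) v = -‖v‖ ^ 2 := by simpa using hv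
  have hnv : 0 < ‖v‖ ^ 2 := by positivity
  set I := {t : ℝ | f (x + t • v) ≤ f x}
  have hI : Convex ℝ I := by
    simpa using (convexOn_comp_add_smul hf hpos x v).convex_le (f x)
  have hI0 : (0 : ℝ) ∈ I := by simp [I]
  have hIclosed : IsClosed I :=
    isClosed_le (continuous_iff_continuousAt.2 fun t => (h1 t).continuousAt) continuous_const
  have hhess : ∀ t ∈ I, iteratedFDeriv ℝ 2 f (x + t • v) ![v, v] ≤ β * ‖v‖ ^ 2 :=
    fun t ht => hle _ ht v
  -- Continuous induction: once `[0, s]` lies in the sublevel set, the Hessian bound there makes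
  -- the slope at `s` at most `-‖v‖² (1 - β s) < 0`, so the line stays below `f x` a bit past `s`.
  have hsub : Icc 0 β⁻¹ ⊆ I := by
    refine (hIclosed.inter isClosed_Icc).Icc_subset_of_forall_mem_nhdsWithin hI0 ?_
    rintro s ⟨hsI, hs0, hsβ⟩
    have hslope := sub_le_mul_of_hasDerivAt_le hs0 h2 fun t ht =>
      hhess t (hI.ordConnected.out hI0 hsI ht)
    have hneg : fderiv ℝ f (x + s • v) v < 0 := by
      have : β * s < 1 := by simpa [hβ.ne'] using mul_lt_mul_of_pos_left hsβ hβ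
      rw [hv'] at hslope
      nlinarith
    filter_upwards [eventually_lt_of_hasDerivAt_neg (h1 s) hneg] with t ht
    exact ht.le.trans hsI
  have := le_taylor_two_of_deriv2_le (inv_nonneg.2 hβ.le) h1 h2 fun t ht => hhess t (hsub ht)
  simp only [zero_smul, add_zero, hv] at this
  calc f (x + β⁻¹ • v) ≤ f x + -‖v‖ ^ 2 * β⁻¹ + β * ‖v‖ ^ 2 * β⁻¹ ^ 2 / 2 := this
    _ = f x - ‖v‖ ^ 2 / (2 * β) := by field_simp; ring

end Convex

section Gradient

variable {E : Type*} [NormedAddCommGroup E] [InnerProductSpace ℝ E] [CompleteSpace E] {f : E → ℝ}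

theorem lower_quadratic_bound_of_hessian_ge (hf : ContDiff ℝ 2 f)
    (hpos : ∀ y w : E, 0 ≤ iteratedFDeriv ℝ 2 f y ![w, w]) {c a : ℝ} {p q : E}
    (hp : f p ≤ c) (hq : f q ≤ c)
    (ha : ∀ y, f y ≤ c → ∀ w : E, a * ‖w‖ ^ 2 ≤ iteratedFDeriv ℝ 2 f y ![w, w]) :
    f p + inner ℝ (gradient f p) (q - p) + a * ‖q - p‖ ^ 2 / 2 ≤ f q := by
  set v := q - p
  have hpv : p + (1 : ℝ) • v = q := by simp [v]
  have hseg : ∀ t ∈ Icc (0 : ℝ) 1, f (p + t • v) ≤ c := fun t ht => by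
    have := (convexOn_comp_add_smul hf hpos p v).le_on_segment (mem_univ 0) (mem_univ 1)
      (by rwa [segment_eq_Icc zero_le_one])
    simp only [zero_smul, add_zero, hpv] at this
    exact this.trans (max_le hp hq)
  have := taylor_two_le_of_le_deriv2 zero_le_one
    (fun t => hasDerivAt_comp_add_smul (hf.differentiable (by norm_num) _))
    (hasDerivAt_fderiv_comp_add_smul hf p v) fun t ht => ha _ (hseg t ht) v
  simp only [zero_smul, add_zero, hpv, ← inner_gradient_left] at this
  linarith

theorem mul_sub_le_norm_gradient_sq (hf : ContDiff ℝ 2 f)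
    (hpos : ∀ y w : E, 0 ≤ iteratedFDeriv ℝ 2 f y ![w, w]) {a : ℝ} (ha₀ : 0 ≤ a) {x xstar : E}
    (hmin : f xstar ≤ f x)
    (ha : ∀ y, f y ≤ f x → ∀ w : E, a * ‖w‖ ^ 2 ≤ iteratedFDeriv ℝ 2 f y ![w, w]) :
    2 * a * (f x - f xstar) ≤ ‖gradient f x‖ ^ 2 := by
  have h := lower_quadratic_bound_of_hessian_ge hf hpos le_rfl hmin ha
  have hcs := neg_le_of_abs_le (abs_real_inner_le_norm (gradient f x) (xstar - x))
  nlinarith [sq_nonneg (‖gradient f x‖ - a * ‖xstar - x‖), mul_le_mul_of_nonneg_left h ha₀,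
    mul_le_mul_of_nonneg_left hcs ha₀]

theorem mul_norm_sub_sq_le (hf : ContDiff ℝ 2 f)
    (hpos : ∀ y w : E, 0 ≤ iteratedFDeriv ℝ 2 f y ![w, w]) {a : ℝ} {x xstar : E}
    (hmin : ∀ y, f xstar ≤ f y)
    (ha : ∀ y, f y ≤ f x → ∀ w : E, a * ‖w‖ ^ 2 ≤ iteratedFDeriv ℝ 2 f y ![w, w]) :
    a * ‖x - xstar‖ ^ 2 ≤ 2 * (f x - f xstar) := by
  have hgrad : gradient f xstar = 0 := by
    simp [gradient, IsLocalMin.fderiv_eq_zero (Filter.Eventually.of_forall hmin)]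
  have := lower_quadratic_bound_of_hessian_ge hf hpos (hmin x) le_rfl ha
  rw [hgrad, inner_zero_left] at this
  linarith

end Gradient

section Blocks

variable {ι : Type*} {F : ι → Type*} [∀ i, NormedAddCommGroup (F i)]

theorem PiLp.smul_single [DecidableEq ι] [∀ i, NormedSpace ℝ (F i)] (t : ℝ) (j : ι) (w : F j) :
    t • PiLp.single 2 j w = PiLp.single 2 j (t • w) := by
  ext i
  rcases eq_or_ne i j with rfl | hij <;> simp [*]

theorem PiLp.add_single_eq_toLp_update [DecidableEq ι] (x : PiLp 2 F) (j : ι) (w : F j) :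
    x + PiLp.single 2 j w = WithLp.toLp 2 (Function.update x.ofLp j (x j + w)) := by
  ext i
  rcases eq_or_ne i j with rfl | hij <;> simp [*]

theorem PiLp.norm_sq_le_card_mul [Fintype ι] (u : PiLp 2 F) (s : Finset ι)
    (hs : ∀ i ∉ s, u i = 0) {j : ι} (hj : ∀ i, ‖u i‖ ≤ ‖u j‖) : ‖u‖ ^ 2 ≤ s.card * ‖u j‖ ^ 2 := by
  rw [PiLp.norm_sq_eq_of_L2, ← Finset.sum_subset (Finset.subset_univ s) fun i _ hi => by
    simp [hs i hi]]
  simpa using Finset.sum_le_card_nsmul s _ _ fun i _ => pow_le_pow_left₀ (norm_nonneg _) (hj i) 2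

theorem PiLp.norm_sq_le_card_mul_of_forall_norm_le [Fintype ι] (u : PiLp 2 F) {j : ι}
    (hj : ∀ i, ‖u i‖ ≤ ‖u j‖) : ‖u‖ ^ 2 ≤ Fintype.card ι * ‖u j‖ ^ 2 := by
  simpa using u.norm_sq_le_card_mul Finset.univ (by simp) hj

theorem PiLp.norm_sq_le_card_sub_one_mul_of_forall_norm_le [Fintype ι] [DecidableEq ι]
    (u : PiLp 2 F) {j j' : ι} (hj' : u j' = 0) (hj : ∀ i, ‖u i‖ ≤ ‖u j‖) :
    ‖u‖ ^ 2 ≤ (Fintype.card ι - 1 : ℝ) * ‖u j‖ ^ 2 := by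
  have := u.norm_sq_le_card_mul (Finset.univ.erase j')
    (fun i hi => by rwa [show i = j' by simpa using hi]) hj
  rwa [Finset.card_erase_of_mem (Finset.mem_univ _), Finset.card_univ,
    Nat.cast_sub (Fintype.card_pos_iff.2 ⟨j⟩), Nat.cast_one] at this

variable [Fintype ι] [DecidableEq ι] [∀ i, InnerProductSpace ℝ (F i)]

theorem PiLp.inner_single_right_eq (x : PiLp 2 F) (j : ι) (w : F j) :
    inner ℝ x (PiLp.single 2 j w) = inner ℝ (x j) w := by
  rw [PiLp.inner_apply, Finset.sum_eq_single j (fun i _ hij => by simp [hij]) (by simp)]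
  simp

variable [∀ i, CompleteSpace (F i)] {f : PiLp 2 F → ℝ}

theorem gradient_update_apply_eq_zero_of_forall_le_update (hf : Differentiable ℝ f)
    {x : PiLp 2 F} {j : ι} {y : F j}
    (hmin : ∀ z, f (WithLp.toLp 2 (Function.update x.ofLp j y)) ≤
      f (WithLp.toLp 2 (Function.update x.ofLp j z))) :
    gradient f (WithLp.toLp 2 (Function.update x.ofLp j y)) j = 0 := by
  set X := WithLp.toLp 2 (Function.update x.ofLp j y)
  have hzero (w : F j) : fderiv ℝ f X (PiLp.single 2 j w) = 0 := by
    have hloc : IsLocalMin (fun t : ℝ => f (X + t • PiLp.single 2 j w)) 0 :=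
      Filter.Eventually.of_forall fun t => by
        simpa [X, PiLp.smul_single, PiLp.add_single_eq_toLp_update] using hmin (y + t • w)
    simpa using hloc.hasDerivAt_eq_zero (hasDerivAt_comp_add_smul (hf _))
  have := hzero (gradient f X j)
  rwa [← inner_gradient_left, PiLp.inner_single_right_eq, inner_self_eq_zero] at this

theorem apply_update_le_sub_of_forall_le_update (hf : ContDiff ℝ 2 f)
    (hpos : ∀ y w : PiLp 2 F, 0 ≤ iteratedFDeriv ℝ 2 f y ![w, w]) {x : PiLp 2 F} {j : ι}
    {y : F j} {β : ℝ} (hβ : 0 < β)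
    (hle : ∀ y, f y ≤ f x → ∀ w, iteratedFDeriv ℝ 2 f y ![w, w] ≤ β * ‖w‖ ^ 2)
    (hmin : ∀ z, f (WithLp.toLp 2 (Function.update x.ofLp j y)) ≤
      f (WithLp.toLp 2 (Function.update x.ofLp j z))) :
    f (WithLp.toLp 2 (Function.update x.ofLp j y)) ≤
      f x - ‖gradient f x j‖ ^ 2 / (2 * β) := by
  set g := gradient f x j
  have hv : fderiv ℝ f x (PiLp.single 2 j (-g)) = -‖PiLp.single 2 j (-g)‖ ^ 2 := by
    rw [← inner_gradient_left, PiLp.inner_single_right_eq, inner_neg_right,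
      PiLp.norm_single, norm_neg, real_inner_self_eq_norm_sq]
  have := descent_lemma_of_hessian_le hf hpos hβ hle hv
  rw [PiLp.norm_single, norm_neg, PiLp.smul_single, PiLp.add_single_eq_toLp_update] at this
  exact (hmin _).trans this

end Blocks

section Rate

theorem le_one_sub_mul_of_descent {e e' g α β c : ℝ} (hβ : 0 < β) (hc : 0 < c)
    (hdesc : e' ≤ e - g / (2 * β)) (hgrad : 2 * α * e ≤ c * g) :
    e' ≤ (1 - 1 / (c * (β / α))) * e := by
  have : α * e / (c * β) ≤ g / (2 * β) := by
    rw [div_le_div_iff₀ (by positivity) (by positivity)]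
    nlinarith
  calc e' ≤ e - α * e / (c * β) := by linarith
    _ = (1 - 1 / (c * (β / α))) * e := by field_simp

theorem one_sub_one_div_mul_div_nonneg {α β c : ℝ} (hα : 0 < α) (hαβ : α ≤ β) (hc : 1 ≤ c) :
    0 ≤ 1 - 1 / (c * (β / α)) := by
  have : 1 ≤ c * (β / α) := one_le_mul_of_one_le_of_one_le hc ((one_le_div hα).2 hαβ)
  linarith [div_le_one_of_le₀ this (by linarith)]

theorem le_mul_prod_Ico_of_le_mul {u r : ℕ → ℝ} {m : ℕ} (hr : ∀ n, m ≤ n → 0 ≤ r n)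
    (h : ∀ n, m ≤ n → u (n + 1) ≤ r n * u n) (n : ℕ) (hn : m ≤ n) :
    u n ≤ u m * ∏ i ∈ Finset.Ico m n, r i := by
  induction n, hn using Nat.le_induction with
  | base => simp
  | succ n hmn ih =>
    rw [Finset.prod_Ico_succ_top hmn]
    calc u (n + 1) ≤ r n * u n := h n hmn
      _ ≤ r n * (u m * ∏ i ∈ Finset.Ico m n, r i) := mul_le_mul_of_nonneg_left ih (hr n hmn)
      _ = _ := by ring

end Rate

section PartialMinimization

variable {ι : Type*} [Fintype ι] [DecidableEq ι] {F : ι → Type*} [∀ i, NormedAddCommGroup (F i)]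
  [∀ i, InnerProductSpace ℝ (F i)] [∀ i, CompleteSpace (F i)] {f : PiLp 2 F → ℝ}

def IsPartialMinSeq (f : PiLp 2 F → ℝ) (x : ℕ → PiLp 2 F) : Prop :=
  ∀ k : ℕ, ∃ j : ι,
    (∀ l : ι, ‖gradient f (x k) l‖ ≤ ‖gradient f (x k) j‖) ∧
    ∃ y : F j,
      (∀ z : F j, f (WithLp.toLp 2 (Function.update (x k) j y)) ≤
        f (WithLp.toLp 2 (Function.update (x k) j z))) ∧
      x (k + 1) = Function.update (x k) j y

theorem apply_update_sub_le_one_sub_mul (hf : ContDiff ℝ 2 f)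
    (hpos : ∀ y w : PiLp 2 F, 0 ≤ iteratedFDeriv ℝ 2 f y ![w, w]) {xstar : PiLp 2 F}
    (hmin : ∀ y, f xstar ≤ f y) {x : PiLp 2 F} {j : ι} {y : F j}
    (hymin : ∀ z, f (WithLp.toLp 2 (Function.update x.ofLp j y)) ≤
      f (WithLp.toLp 2 (Function.update x.ofLp j z)))
    {α β c : ℝ} (hα : 0 ≤ α) (hβ : 0 < β) (hc : 0 < c)
    (hEig : ∀ y, f y ≤ f x → ∀ v, α * ‖v‖ ^ 2 ≤ iteratedFDeriv ℝ 2 f y ![v, v] ∧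
      iteratedFDeriv ℝ 2 f y ![v, v] ≤ β * ‖v‖ ^ 2)
    (hmax : ‖gradient f x‖ ^ 2 ≤ c * ‖gradient f x j‖ ^ 2) :
    f (WithLp.toLp 2 (Function.update x.ofLp j y)) - f xstar ≤
      (1 - 1 / (c * (β / α))) * (f x - f xstar) := by
  refine le_one_sub_mul_of_descent hβ hc ?_ ((mul_sub_le_norm_gradient_sq hf hpos hα (hmin x)
    fun y hy v => (hEig y hy v).1).trans hmax)
  linarith [apply_update_le_sub_of_forall_le_update hf hpos hβ
    (fun y hy v => (hEig y hy v).2) hymin]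

theorem IsPartialMinSeq.sub_le_mul_prod {x : ℕ → PiLp 2 F} (hx : IsPartialMinSeq f x)
    (hd : 2 ≤ Fintype.card ι) (hf : ContDiff ℝ 2 f)
    (hpos : ∀ y w : PiLp 2 F, 0 ≤ iteratedFDeriv ℝ 2 f y ![w, w]) {xstar : PiLp 2 F}
    (hmin : ∀ y, f xstar ≤ f y) {α β : ℕ → ℝ} (hα : ∀ k, 0 < α k) (hαβ : ∀ k, α k ≤ β k)
    (hEig : ∀ k y, f y ≤ f (x k) → ∀ v, α k * ‖v‖ ^ 2 ≤ iteratedFDeriv ℝ 2 f y ![v, v] ∧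
      iteratedFDeriv ℝ 2 f y ![v, v] ≤ β k * ‖v‖ ^ 2)
    (k : ℕ) (hk : 1 ≤ k) :
    f (x k) - f xstar ≤ ‖gradient f (x 0)‖ ^ 2 / (2 * α 0) *
      (1 - 1 / (Fintype.card ι * (β 0 / α 0))) *
        ∏ i ∈ Finset.Ico 1 k, (1 - 1 / ((Fintype.card ι - 1) * (β i / α i))) := by
  choose j hjmax y hymin hupd using hx
  replace hupd n : x (n + 1) = WithLp.toLp 2 (Function.update (x n) (j n) (y n)) :=
    congrArg (WithLp.toLp 2) (hupd n)
  have hd1 : (1 : ℝ) ≤ Fintype.card ι - 1 := by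
    have : (2 : ℝ) ≤ Fintype.card ι := by exact_mod_cast hd
    linarith
  have hstep n {c : ℝ} (hc : 0 < c)
      (hmax : ‖gradient f (x n)‖ ^ 2 ≤ c * ‖gradient f (x n) (j n)‖ ^ 2) :
      f (x (n + 1)) - f xstar ≤ (1 - 1 / (c * (β n / α n))) * (f (x n) - f xstar) :=
    hupd n ▸ apply_update_sub_le_one_sub_mul hf hpos hmin (hymin n) (hα n).le
      ((hα n).trans_le (hαβ n)) hc (hEig n) hmax
  have hfirst := hstep 0 (by positivity)
    ((gradient f (x 0)).norm_sq_le_card_mul_of_forall_norm_le (hjmax 0))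
  have hlater n (hn : 1 ≤ n) : f (x (n + 1)) - f xstar ≤
      (1 - 1 / ((Fintype.card ι - 1) * (β n / α n))) * (f (x n) - f xstar) := by
    obtain ⟨n, rfl⟩ := Nat.exists_eq_add_of_le' hn
    have hzero : gradient f (x (n + 1)) (j n) = 0 := by
      rw [hupd]
      exact gradient_update_apply_eq_zero_of_forall_le_update
        (hf.differentiable (by norm_num)) (hymin n)
    exact hstep (n + 1) (by linarith)
      (PiLp.norm_sq_le_card_sub_one_mul_of_forall_norm_le _ hzero (hjmax (n + 1)))
  have he0 : f (x 0) - f xstar ≤ ‖gradient f (x 0)‖ ^ 2 / (2 * α 0) := by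
    rw [le_div_iff₀ (by linarith [hα 0]), mul_comm]
    exact mul_sub_le_norm_gradient_sq hf hpos (hα 0).le (hmin (x 0))
      fun y hy v => (hEig 0 y hy v).1
  have hr n : 0 ≤ 1 - 1 / ((Fintype.card ι - 1 : ℝ) * (β n / α n)) :=
    one_sub_one_div_mul_div_nonneg (hα n) (hαβ n) hd1
  set P := ∏ i ∈ Finset.Ico 1 k, (1 - 1 / ((Fintype.card ι - 1 : ℝ) * (β i / α i)))
  have hP : 0 ≤ P := Finset.prod_nonneg fun i _ => hr i
  have hr0 : 0 ≤ 1 - 1 / ((Fintype.card ι : ℝ) * (β 0 / α 0)) :=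
    one_sub_one_div_mul_div_nonneg (hα 0) (hαβ 0) (by linarith)
  calc f (x k) - f xstar ≤ (f (x 1) - f xstar) * P :=
      le_mul_prod_Ico_of_le_mul (u := fun n => f (x n) - f xstar) (fun n _ => hr n) hlater k hk
    _ ≤ (1 - 1 / (Fintype.card ι * (β 0 / α 0))) * (f (x 0) - f xstar) * P := by gcongr
    _ ≤ (1 - 1 / (Fintype.card ι * (β 0 / α 0))) * (‖gradient f (x 0)‖ ^ 2 / (2 * α 0)) * P := by
      gcongr
    _ = _ := by ring

end PartialMinimization

theorem partial_min_geometric_convergence_iterates_general {d : ℕ} (hd : 2 ≤ d) {m : Fin d → ℕ}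
    (f : PiLp 2 (fun i : Fin d => EuclideanSpace ℝ (Fin (m i))) → ℝ)
    (hf : ContDiff ℝ 2 f)
    (hHess : ∀ x v : PiLp 2 (fun i : Fin d => EuclideanSpace ℝ (Fin (m i))), v ≠ 0 →
      0 < iteratedFDeriv ℝ 2 f x ![v, v])
    (xstar : PiLp 2 (fun i : Fin d => EuclideanSpace ℝ (Fin (m i))))
    (hmin : ∀ y, f xstar ≤ f y)
    (x : ℕ → PiLp 2 (fun i : Fin d => EuclideanSpace ℝ (Fin (m i))))
    (halg : ∀ k : ℕ, ∃ j : Fin d,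
      (∀ l : Fin d, ‖gradient f (x k) l‖ ≤ ‖gradient f (x k) j‖) ∧
      ∃ y : EuclideanSpace ℝ (Fin (m j)),
        (∀ z : EuclideanSpace ℝ (Fin (m j)),
          f (WithLp.toLp 2 (Function.update (x k) j y)) ≤ f (WithLp.toLp 2 (Function.update (x k) j z))) ∧
        x (k + 1) = Function.update (x k) j y)
    (α β : ℕ → ℝ) (hα : ∀ k, 0 < α k) (hαβ : ∀ k, α k ≤ β k)
    (hEig : ∀ k : ℕ, ∀ y, f y ≤ f (x k) →
      ∀ v : PiLp 2 (fun i : Fin d => EuclideanSpace ℝ (Fin (m i))),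
      α k * ‖v‖ ^ 2 ≤ iteratedFDeriv ℝ 2 f y ![v, v] ∧
      iteratedFDeriv ℝ 2 f y ![v, v] ≤ β k * ‖v‖ ^ 2) :
    ∀ k : ℕ, 1 ≤ k →
      ‖x k - xstar‖ ^ 2 ≤
        ‖gradient f (x 0)‖ ^ 2 / (α k * α 0) * (1 - 1 / (d * (β 0 / α 0))) *
          ∏ i ∈ Finset.Icc 1 (k - 1), (1 - 1 / ((d - 1) * (β i / α i))) := by
  intro k hk
  have hpos := iteratedFDeriv_two_nonneg hHess
  have hgap :=
    IsPartialMinSeq.sub_le_mul_prod halg (by simpa using hd) hf hpos hmin hα hαβ hEig k hk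
  have hdist := mul_norm_sub_sq_le hf hpos hmin fun y hy v => (hEig k y hy v).1
  rw [Fintype.card_fin] at hgap
  rw [show Finset.Icc 1 (k - 1) = Finset.Ico 1 k by ext; simp; omega, div_mul_eq_mul_div,
    div_mul_eq_mul_div, le_div_iff₀ (mul_pos (hα k) (hα 0))]
  have hα0 := hα 0
  calc ‖x k - xstar‖ ^ 2 * (α k * α 0) ≤ α 0 * (2 * (f (x k) - f xstar)) := by nlinarith
    _ ≤ _ := by grw [hgap]; exact le_of_eq (by field_simp)

/-- Geometric convergence of iterates along the partial-minimization
algorithm: for `k ≥ 1`,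
`‖x_k − x*‖² ≤ (‖∇f(x₀)‖²/(α(t_k)α(t₀)))(1 − 1/(dκ₀)) ∏_{i=1}^{k−1}(1 − 1/((d−1)κᵢ))`. -/
theorem partial_min_geometric_convergence_iterates {d : ℕ} (hd : 2 ≤ d) {m : Fin d → ℕ}
    (hm : ∀ i, 1 ≤ m i)
    (f : PiLp 2 (fun i : Fin d => EuclideanSpace ℝ (Fin (m i))) → ℝ)
    (hf : ContDiff ℝ 2 f)
    (hHess : ∀ x v : PiLp 2 (fun i : Fin d => EuclideanSpace ℝ (Fin (m i))), v ≠ 0 →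
      0 < iteratedFDeriv ℝ 2 f x ![v, v])
    (xstar : PiLp 2 (fun i : Fin d => EuclideanSpace ℝ (Fin (m i))))
    (hmin : ∀ y, f xstar ≤ f y)
    (huniq : ∀ y, (∀ z, f y ≤ f z) → y = xstar)
    (x : ℕ → PiLp 2 (fun i : Fin d => EuclideanSpace ℝ (Fin (m i))))
    (halg : ∀ k : ℕ, ∃ j : Fin d,
      (∀ l : Fin d, ‖gradient f (x k) l‖ ≤ ‖gradient f (x k) j‖) ∧
      ∃ y : EuclideanSpace ℝ (Fin (m j)),
        (∀ z : EuclideanSpace ℝ (Fin (m j)),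
          f (WithLp.toLp 2 (Function.update (x k) j y)) ≤ f (WithLp.toLp 2 (Function.update (x k) j z))) ∧
        x (k + 1) = Function.update (x k) j y)
    (α β : ℕ → ℝ) (hα : ∀ k, 0 < α k) (hαβ : ∀ k, α k ≤ β k)
    (hEig : ∀ k : ℕ, ∀ y, f y ≤ f (x k) →
      ∀ v : PiLp 2 (fun i : Fin d => EuclideanSpace ℝ (Fin (m i))),
      α k * ‖v‖ ^ 2 ≤ iteratedFDeriv ℝ 2 f y ![v, v] ∧
      iteratedFDeriv ℝ 2 f y ![v, v] ≤ β k * ‖v‖ ^ 2) :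
    ∀ k : ℕ, 1 ≤ k →
      ‖x k - xstar‖ ^ 2 ≤
        ‖gradient f (x 0)‖ ^ 2 / (α k * α 0) * (1 - 1 / (d * (β 0 / α 0))) *
          ∏ i ∈ Finset.Icc 1 (k - 1), (1 - 1 / ((d - 1) * (β i / α i))) :=
  partial_min_geometric_convergence_iterates_general hd f hf hHess xstar hmin x halg α β hα hαβ hEig
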